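/- Let v : ℝ → ℝ be an odd, 2ℓ-periodic function whose restriction to (0,ℓ) is in L²(0,ℓ). Then sup over t > 0 and x ∈ [0,ℓ] of |(1/2) ∫_{x-t}^{x+t} v(y) dy| is at most √ℓ · ‖v‖_{L²(0,ℓ)}. -/

import Mathlib

open MeasureTheory

/-! The primitive `V z = ∫₀^z v` turns the quantity into `(V (x + t) - V (x - t)) / 2`. Oddness of
`v` makes `V` even and kills the integral of `v` over a period, so `V` is `2ℓ`-periodic as well;
hence `V` takes all its values on `[0, ℓ]`, where Cauchy–Schwarz gives `|V u| ≤ √u ‖v‖_{L²(0,u)}`.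
The estimate follows from `|V (x + t) - V (x - t)| ≤ 2 sup |V|`. -/

theorem abs_setIntegral_le_sqrt_measure_mul_eLpNorm_two {α : Type*} [MeasurableSpace α]
    {μ : Measure α} {s : Set α} {f : α → ℝ} (hs : μ s ≠ ⊤) (hf : MemLp f 2 (μ.restrict s)) :
    |∫ x in s, f x ∂μ| ≤ Real.sqrt (μ s).toReal * (eLpNorm f 2 (μ.restrict s)).toReal := by
  have hL1 : eLpNorm f 1 (μ.restrict s) ≤ eLpNorm f 2 (μ.restrict s) * μ s ^ (1 / 2 : ℝ) := by
    convert eLpNorm_le_eLpNorm_mul_rpow_measure_univ (p := 1) (q := 2) one_le_two hf.1 using 3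
    · rw [Measure.restrict_apply_univ]
    · norm_num
  calc |∫ x in s, f x ∂μ| ≤ ∫ x in s, ‖f x‖ ∂μ := norm_integral_le_integral_norm f
    _ = (eLpNorm f 1 (μ.restrict s)).toReal := by
      rw [eLpNorm_one_eq_lintegral_enorm, integral_norm_eq_lintegral_enorm hf.1]
    _ ≤ (eLpNorm f 2 (μ.restrict s) * μ s ^ (1 / 2 : ℝ)).toReal :=
      ENNReal.toReal_mono (by finiteness) hL1
    _ = _ := by
      rw [ENNReal.toReal_mul, ← ENNReal.toReal_rpow, Real.sqrt_eq_rpow, mul_comm]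

section Odd

variable {E : Type*} [NormedAddCommGroup E] [NormedSpace ℝ E] {f : ℝ → E}

theorem intervalIntegral_zero_neg_eq_of_odd (hodd : ∀ y, f (-y) = -f y) (z : ℝ) :
    ∫ y in (0 : ℝ)..-z, f y = ∫ y in (0 : ℝ)..z, f y := by
  rw [← neg_zero, ← intervalIntegral.integral_comp_neg, neg_zero]
  simp only [hodd, intervalIntegral.integral_neg, ← intervalIntegral.integral_symm]

theorem intervalIntegral_neg_eq_zero_of_odd (hodd : ∀ y, f (-y) = -f y) (a : ℝ) :
    ∫ y in -a..a, f y = 0 := by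
  have h := intervalIntegral.integral_comp_neg (a := -a) (b := a) f
  simp only [hodd, intervalIntegral.integral_neg, neg_neg] at h
  have h2 : (2 : ℝ) • ∫ y in -a..a, f y = 0 := by
    rw [two_smul]; nth_rw 1 [← h]; exact neg_add_cancel _
  exact (smul_eq_zero.mp h2).resolve_left two_ne_zero

end Odd

theorem intervalIntegrable_of_odd_of_periodic {E : Type*} [NormedAddCommGroup E] {f : ℝ → E}
    {ℓ : ℝ} (hℓ : ℓ ≠ 0) (hodd : ∀ y, f (-y) = -f y) (hf : Function.Periodic f (2 * ℓ))
    (h : IntervalIntegrable f volume 0 ℓ) (a b : ℝ) : IntervalIntegrable f volume a b := by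
  have hneg : IntervalIntegrable f volume (-ℓ) 0 := by
    simpa [hodd, Pi.neg_def] using (h.comp_sub_left 0).neg.symm
  refine hf.intervalIntegrable (mul_ne_zero two_ne_zero hℓ) (t := -ℓ) ?_ a b
  rw [show -ℓ + 2 * ℓ = ℓ by ring]
  exact hneg.trans h

theorem Function.Periodic.periodic_intervalIntegral_of_integral_eq_zero {E : Type*}
    [NormedAddCommGroup E] [NormedSpace ℝ E] {f : ℝ → E} {T : ℝ} (hf : Function.Periodic f T)
    (hint : ∀ a b, IntervalIntegrable f volume a b) {t : ℝ} (h0 : ∫ y in t..t + T, f y = 0)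
    (c : ℝ) : Function.Periodic (fun z ↦ ∫ y in c..z, f y) T := fun z ↦ by
  dsimp only
  rw [← intervalIntegral.integral_add_adjacent_intervals (hint c z) (hint z (z + T)),
    hf.intervalIntegral_add_eq z t, h0, add_zero]

theorem Function.Periodic.exists_mem_Icc_eq_of_even {β : Type*} {g : ℝ → β} {ℓ : ℝ}
    (hℓ : 0 < ℓ) (hg : Function.Periodic g (2 * ℓ)) (heven : ∀ z, g (-z) = g z) (z : ℝ) :
    ∃ u ∈ Set.Icc 0 ℓ, g z = g u := by
  obtain ⟨y, hy, hzy⟩ := hg.exists_mem_Ico (by linarith) z (-ℓ)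
  rcases le_total 0 y with hy0 | hy0
  · exact ⟨y, ⟨hy0, by linarith [hy.2]⟩, hzy⟩
  · exact ⟨-y, ⟨by linarith, by linarith [hy.1]⟩, by rw [hzy, heven]⟩

theorem abs_intervalIntegral_le_sqrt_mul_eLpNorm_two {v : ℝ → ℝ} {ℓ u : ℝ} (hu : 0 ≤ u)
    (huℓ : u ≤ ℓ) (hv : MemLp v 2 (volume.restrict (Set.Ioo 0 ℓ))) :
    |∫ y in 0..u, v y| ≤ Real.sqrt ℓ * (eLpNorm v 2 (volume.restrict (Set.Ioo 0 ℓ))).toReal := by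
  have hsub : volume.restrict (Set.Ioo 0 u) ≤ volume.restrict (Set.Ioo 0 ℓ) :=
    Measure.restrict_mono (Set.Ioo_subset_Ioo_right huℓ) le_rfl
  calc |∫ y in 0..u, v y| = |∫ y in Set.Ioo 0 u, v y| := by
        rw [intervalIntegral.integral_of_le hu, integral_Ioc_eq_integral_Ioo]
    _ ≤ Real.sqrt (volume (Set.Ioo 0 u)).toReal
          * (eLpNorm v 2 (volume.restrict (Set.Ioo 0 u))).toReal :=
        abs_setIntegral_le_sqrt_measure_mul_eLpNorm_two (by simp) (hv.mono_measure hsub)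
    _ ≤ _ := by
        rw [Real.volume_Ioo, sub_zero, ENNReal.toReal_ofReal hu]
        gcongr
        exact hv.eLpNorm_ne_top

theorem stmt_1_general (ℓ : ℝ) (hℓ : 0 < ℓ) (v : ℝ → ℝ)
    (hodd : ∀ y, v (-y) = -v y) (hper : ∀ y, v (y + 2 * ℓ) = v y)
    (hL2 : MemLp v 2 (volume.restrict (Set.Ioo 0 ℓ))) :
    ∀ t > (0 : ℝ), ∀ x ∈ Set.Icc (0 : ℝ) ℓ,
      |(1 / 2) * ∫ y in (x - t)..(x + t), v y|
        ≤ Real.sqrt ℓ * (eLpNorm v 2 (volume.restrict (Set.Ioo 0 ℓ))).toReal := by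
  intro t _ x _
  have hint : ∀ a b, IntervalIntegrable v volume a b :=
    intervalIntegrable_of_odd_of_periodic hℓ.ne' hodd hper
      ((intervalIntegrable_iff_integrableOn_Ioo_of_le hℓ.le).mpr (hL2.integrable one_le_two))
  have hVper : Function.Periodic (fun z ↦ ∫ y in 0..z, v y) (2 * ℓ) :=
    Function.Periodic.periodic_intervalIntegral_of_integral_eq_zero hper hint (t := -ℓ)
      (by rw [show -ℓ + 2 * ℓ = ℓ by ring]; exact intervalIntegral_neg_eq_zero_of_odd hodd ℓ) 0
  have hV : ∀ z, |∫ y in 0..z, v y|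
      ≤ Real.sqrt ℓ * (eLpNorm v 2 (volume.restrict (Set.Ioo 0 ℓ))).toReal := fun z ↦ by
    obtain ⟨u, ⟨hu0, huℓ⟩, hzu⟩ :=
      hVper.exists_mem_Icc_eq_of_even hℓ (intervalIntegral_zero_neg_eq_of_odd hodd) z
    rw [hzu]
    exact abs_intervalIntegral_le_sqrt_mul_eLpNorm_two hu0 huℓ hL2
  rw [← intervalIntegral.integral_interval_sub_left (hint 0 _) (hint 0 _), abs_mul,
    abs_of_pos one_half_pos]
  linarith [hV (x + t), hV (x - t), abs_sub (∫ y in 0..x + t, v y) (∫ y in 0..x - t, v y)]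

/-- For `v : ℝ → ℝ` odd, `2ℓ`-periodic, locally integrable, whose restriction to `(0,ℓ)`
is in `L²(0,ℓ)`, the quantity `|(1/2) ∫_{x-t}^{x+t} v|` is bounded by
`√ℓ · ‖v‖_{L²(0,ℓ)}` uniformly in `t > 0` and `x ∈ [0,ℓ]`. -/
theorem stmt_1 (ℓ : ℝ) (hℓ : 0 < ℓ) (v : ℝ → ℝ)
    (hodd : ∀ y, v (-y) = -v y) (hper : ∀ y, v (y + 2 * ℓ) = v y)
    (hloc : LocallyIntegrable v volume)
    (hL2 : MemLp v 2 (volume.restrict (Set.Ioo 0 ℓ))) :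
    ∀ t > (0 : ℝ), ∀ x ∈ Set.Icc (0 : ℝ) ℓ,
      |(1 / 2) * ∫ y in (x - t)..(x + t), v y|
        ≤ Real.sqrt ℓ * (eLpNorm v 2 (volume.restrict (Set.Ioo 0 ℓ))).toReal :=
  stmt_1_general ℓ hℓ v hodd hper hL2
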